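/- arXiv:2605.29722 — 2 statements merged into one kernel-verified Lean document; each statement's English description precedes it below -/
import Mathlib

section
/- Let R be an associative unital ring (not necessarily commutative), α : ℤ → R a family of elements, and S_s^k(n) the associated non-commutative Svinin polynomials. Let m ≥ 1 be an integer and let d_{2k} (0 ≤ k ≤ m) and c_{2k+1} (0 ≤ k ≤ m) be central elements of R. Define, for 0 ≤ k ≤ m and n ∈ ℤ, B_{2k+1,n} := c_{2k+1} − Σ_{r=1}^{m−k} d_{2(k+r)} · S_r^r(n+r−1) and P_{2k,n} := Σ_{r=0}^{m−k} d_{2(k+r)} · S_{r+1}^r(n+r−1). Then for every integer 1 ≤ k ≤ m and every n ∈ ℤ, B_{2k−1,n−1} − B_{2k−1,n} − α_n · P_{2k,n+1} + P_{2k,n−1} · α_{n−1} = 0. -/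
/-!
Peeling off the `j = 0` term of the defining sum gives the recursion
`S_{s+1}^{k+1}(n) = α_{n-k} S_{s+1}^k(n) + S_s^{k+1}(n-1)`, and a double induction on `k` and `s`
then yields the dual recursion `S_{s+1}^{k+1}(n) - S_s^{k+1}(n) = S_{s+1}^k(n-1) α_{n-s}`, in which
`α` multiplies from the right. Together, at `s = k = r`, they give the identity
`S_{r+1}^{r+1}(n+r) - S_{r+1}^{r+1}(n+r-1) = α_n S_{r+1}^r(n+r) - S_{r+1}^r(n+r-2) α_{n-1}`.
After the shift `r ↦ r + 1` in `B`, the left-hand side of the theorem is the sum over `r` of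
`d_{2(k+r)}` times this identity; centrality of the `d`'s lets `α_n` pass them.
-/

/-- Non-commutative Svinin polynomials: `svinin α s k n` is `S_s^k(n)`, defined by
`S_s^0(n) = 1` and `S_s^k(n) = Σ_{j=0}^{s−1} α_{n−k−j+1} · S_{s−j}^{k−1}(n−j)` for `k ≥ 1`. -/
def svinin {R : Type*} [Ring R] (α : ℤ → R) : ℕ → ℕ → ℤ → R
  | _, 0, _ => 1
  | s, k + 1, n =>
      ∑ j ∈ Finset.range s,
        α (n - ((k : ℤ) + 1) - (j : ℤ) + 1) * svinin α (s - j) k (n - (j : ℤ))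

/-- `Bcoef α m d c k n` is `B_{2k+1,n} = c_{2k+1} − Σ_{r=1}^{m−k} d_{2(k+r)} · S_r^r(n+r−1)`,
where `d j` stands for `d_{2j}` and `c j` stands for `c_{2j+1}`. -/
def Bcoef {R : Type*} [Ring R] (α : ℤ → R) (m : ℕ) (d c : ℕ → R) (k : ℕ) (n : ℤ) : R :=
  c k - ∑ r ∈ Finset.Icc 1 (m - k), d (k + r) * svinin α r r (n + (r : ℤ) - 1)

/-- `Pcoef α m d k n` is `P_{2k,n} = Σ_{r=0}^{m−k} d_{2(k+r)} · S_{r+1}^r(n+r−1)`,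
where `d j` stands for `d_{2j}`. -/
def Pcoef {R : Type*} [Ring R] (α : ℤ → R) (m : ℕ) (d : ℕ → R) (k : ℕ) (n : ℤ) : R :=
  ∑ r ∈ Finset.range (m - k + 1), d (k + r) * svinin α (r + 1) r (n + (r : ℤ) - 1)

open Finset

section Svinin

variable {R : Type*} [Ring R] (α : ℤ → R)

theorem svinin_zero_succ (k : ℕ) (n : ℤ) : svinin α 0 (k + 1) n = 0 := by
  simp [svinin]

theorem svinin_succ_succ (s k : ℕ) (n : ℤ) :
    svinin α (s + 1) (k + 1) n = α (n - k) * svinin α (s + 1) k n + svinin α s (k + 1) (n - 1) := by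
  rw [svinin, sum_range_succ', add_comm, svinin]
  congr 1
  · simp only [Nat.cast_zero, sub_zero, Nat.sub_zero]
    ring_nf
  · refine sum_congr rfl fun j _ => ?_
    rw [show s + 1 - (j + 1) = s - j by omega]
    push_cast
    ring_nf

theorem svinin_succ_sub (k s : ℕ) (n : ℤ) :
    svinin α (s + 1) (k + 1) n - svinin α s (k + 1) n = svinin α (s + 1) k (n - 1) * α (n - s) := by
  induction k generalizing s n with
  | zero =>
    simp only [svinin, sum_range_succ, mul_one, one_mul, add_sub_cancel_left]
    ring_nf
  | succ k ihk =>
    induction s generalizing n with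
    | zero =>
      have h := ihk 0 n
      rw [svinin_zero_succ, sub_zero] at h ⊢
      rw [svinin_succ_succ, svinin_zero_succ, add_zero, h, svinin_succ_succ α 0 k (n - 1),
        svinin_zero_succ, add_zero, mul_assoc]
      push_cast
      ring_nf
    | succ s ihs =>
      have hα : α (n - ↑(k + 1)) = α (n - 1 - k) := by push_cast; ring_nf
      have hα' : α (n - 1 - s) = α (n - ↑(s + 1)) := by push_cast; ring_nf
      rw [svinin_succ_succ α (s + 1) (k + 1) n, svinin_succ_succ α s (k + 1) n,
        svinin_succ_succ α (s + 1) k (n - 1), hα]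
      calc _ = α (n - 1 - k) * (svinin α (s + 1 + 1) (k + 1) n - svinin α (s + 1) (k + 1) n)
            + (svinin α (s + 1) (k + 1 + 1) (n - 1) - svinin α s (k + 1 + 1) (n - 1)) := by
              noncomm_ring
        _ = _ := by rw [ihk, ihs, hα', sub_sub]; noncomm_ring

theorem svinin_diagonal_relation (r : ℕ) (n : ℤ) :
    svinin α (r + 1) (r + 1) (n + r) - svinin α (r + 1) (r + 1) (n + r - 1)
      - α n * svinin α (r + 1) r (n + r) + svinin α (r + 1) r (n + r - 2) * α (n - 1) = 0 := by
  have hpeel := svinin_succ_succ α r r (n + r)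
  have hdual := svinin_succ_sub α r r (n + r - 1)
  rw [add_sub_cancel_right] at hpeel
  rw [show n + r - 1 - 1 = n + r - 2 by ring, show n + r - 1 - r = n - 1 by ring] at hdual
  rw [hpeel, ← hdual]
  abel

end Svinin

theorem Bcoef_eq_sub_sum_range {R : Type*} [Ring R] (α : ℤ → R) (m : ℕ) (d c : ℕ → R)
    (k : ℕ) (n : ℤ) :
    Bcoef α m d c k n
      = c k - ∑ r ∈ range (m - k), d (k + r + 1) * svinin α (r + 1) (r + 1) (n + r) := by
  rw [Bcoef, ← Finset.Ico_add_one_right_eq_Icc, sum_Ico_eq_sum_range]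
  congr 1
  refine sum_congr rfl fun r _ => ?_
  rw [add_comm 1 r, ← add_assoc]
  push_cast
  ring_nf

theorem dPI_system_first_set_general {R : Type*} [Ring R] (α : ℤ → R)
    (m : ℕ) (d c : ℕ → R)
    (hd : ∀ k ≤ m, d k ∈ Set.center R)
    (k : ℕ) (hk1 : 1 ≤ k) (hk2 : k ≤ m) (n : ℤ) :
    Bcoef α m d c (k - 1) (n - 1) - Bcoef α m d c (k - 1) n
      - α n * Pcoef α m d k (n + 1) + Pcoef α m d k (n - 1) * α (n - 1) = 0 := by
  obtain ⟨k, rfl⟩ : ∃ j, k = j + 1 := ⟨k - 1, by omega⟩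
  rw [Bcoef_eq_sub_sum_range, Bcoef_eq_sub_sum_range, Pcoef, Pcoef, mul_sum, sum_mul,
    sub_sub_sub_cancel_left, Nat.add_sub_cancel, show m - k = m - (k + 1) + 1 by omega,
    ← sum_sub_distrib, ← sum_sub_distrib, ← sum_add_distrib]
  refine sum_eq_zero fun r hr => ?_
  have hcomm : α n * d (k + 1 + r) = d (k + 1 + r) * α n :=
    ((hd _ (by rw [mem_range] at hr; omega)).comm (α n)).symm
  rw [show k + r + 1 = k + 1 + r by omega, ← mul_assoc, hcomm,
    ← mul_zero (d (k + 1 + r)), ← svinin_diagonal_relation α r n,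
    show n - 1 + r - 1 = n + r - 2 by ring, show n - 1 + r = n + r - 1 by ring,
    show n + 1 + r - 1 = n + r by ring]
  noncomm_ring

/-- For `1 ≤ k ≤ m` and all `n`:
`B_{2k−1,n−1} − B_{2k−1,n} − α_n · P_{2k,n+1} + P_{2k,n−1} · α_{n−1} = 0`. -/
theorem dPI_system_first_set {R : Type*} [Ring R] (α : ℤ → R)
    (m : ℕ) (hm : 1 ≤ m) (d c : ℕ → R)
    (hd : ∀ k ≤ m, d k ∈ Set.center R) (hc : ∀ k ≤ m, c k ∈ Set.center R)
    (k : ℕ) (hk1 : 1 ≤ k) (hk2 : k ≤ m) (n : ℤ) :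
    Bcoef α m d c (k - 1) (n - 1) - Bcoef α m d c (k - 1) n
      - α n * Pcoef α m d k (n + 1) + Pcoef α m d k (n - 1) * α (n - 1) = 0 :=
  dPI_system_first_set_general α m d c hd k hk1 hk2 n
end

section
/- Let R be an associative unital ring (not necessarily commutative), α : ℤ → R a family of elements, and S_s^k(n) the associated non-commutative Svinin polynomials. Let c_0, c_1 ∈ R be central elements and let r ≥ 1 be an integer. Define F_{r,n} := S_r^r(n+r) − c_1·(−1)^n − c_0 and D_{r,n} := S_{r+1}^r(n+r) − S_r^r(n+r) − S_r^r(n+r−1). Then for every n ∈ ℤ, α_n · S_r^r(n+r) − S_r^r(n+r−2) · α_n = α_n·(F_{r,n} − F_{r,n−1} − D_{r,n}) + (F_{r,n−1} − F_{r,n−2} + D_{r,n−1})·α_n. (This rewrites the right-hand side of the r-th non-commutative Volterra lattice flow ∂_{t_r}α_n = S_r^r(n+r−2)·α_n − α_n·S_r^r(n+r), up to an overall sign, in the form used to reduce its stationary flows to the non-commutative discrete first Painlevé hierarchy with c_n = c_1·(−1)^n + c_0.) -/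
/-- `Fvl α c₀ c₁ r n` is `F_{r,n} = S_r^r(n+r) − c₁·(−1)^n − c₀`. -/
def Fvl {R : Type*} [Ring R] (α : ℤ → R) (c₀ c₁ : R) (r : ℕ) (n : ℤ) : R :=
  svinin α r r (n + (r : ℤ)) - c₁ * ((((-1 : ℤˣ) ^ n : ℤˣ) : ℤ) : R) - c₀

/-- `Dvl α r n` is `D_{r,n} = S_{r+1}^r(n+r) − S_r^r(n+r) − S_r^r(n+r−1)`. -/
def Dvl {R : Type*} [Ring R] (α : ℤ → R) (r : ℕ) (n : ℤ) : R :=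
  svinin α (r + 1) r (n + (r : ℤ)) - svinin α r r (n + (r : ℤ)) - svinin α r r (n + (r : ℤ) - 1)

/-!
Write `B = S_r^r(n+r-1)` and `Y = S_{r+1}^{r-1}(n+r-1)`. Splitting off the last factor `α` of
`S_{r+1}^r(n+r)` and the first factor `α` of `S_{r+1}^r(n+r-1)` gives
`D_{r,n} = Y α_n - B` and `D_{r,n-1} = α_n Y - B`, hence
`α_n D_{r,n} - D_{r,n-1} α_n = B α_n - α_n B`. The sign terms of `F` telescope to `∓2 c₁ (-1)^n`,
which commutes with `α_n`, and the identity follows by expanding both sides.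
-/

section Svinin

variable {R : Type*} [Ring R] (α : ℤ → R)

@[simp]
lemma svinin_zero (s : ℕ) (n : ℤ) : svinin α s 0 n = 1 := rfl

lemma svinin_succ (s k : ℕ) (n : ℤ) :
    svinin α s (k + 1) n
      = ∑ j ∈ Finset.range s, α (n - k - j) * svinin α (s - j) k (n - j) := by
  rw [svinin]
  refine Finset.sum_congr rfl fun j _ => ?_
  ring_nf

lemma svinin_succ_eq_sum_mul (k s : ℕ) (n : ℤ) :
    svinin α s (k + 1) n = ∑ j ∈ Finset.range s, svinin α (j + 1) k (n - 1) * α (n - j) := by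
  induction k generalizing s n with
  | zero => simp [svinin_succ]
  | succ k ih =>
    calc svinin α s (k + 1 + 1) n
        = ∑ j ∈ Finset.range s, ∑ i ∈ Finset.range (s - j),
            α (n - (k + 1 : ℕ) - j) * (svinin α (i + 1) k (n - j - 1) * α (n - j - i)) := by
          simp_rw [svinin_succ α s (k + 1), ih, Finset.mul_sum]
      _ = ∑ m ∈ Finset.range s, ∑ j ∈ Finset.range (m + 1),
            α (n - (k + 1 : ℕ) - j) *
              (svinin α (m - j + 1) k (n - j - 1) * α (n - j - (m - j : ℕ))) :=
          (Finset.sum_range_diag_flip s _).symm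
      _ = ∑ m ∈ Finset.range s, svinin α (m + 1) (k + 1) (n - 1) * α (n - m) := by
          refine Finset.sum_congr rfl fun m _ => ?_
          rw [svinin_succ, Finset.sum_mul]
          refine Finset.sum_congr rfl fun j hj => ?_
          have hjm : j ≤ m := Nat.lt_succ_iff.mp (Finset.mem_range.mp hj)
          rw [Nat.cast_sub hjm, Nat.sub_add_comm hjm, mul_assoc]
          push_cast
          ring_nf

lemma svinin_succ_succ_eq_mul_add (k s : ℕ) (n : ℤ) :
    svinin α (s + 1) (k + 1) n = α (n - k) * svinin α (s + 1) k n + svinin α s (k + 1) (n - 1) := by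
  rw [svinin_succ, svinin_succ, Finset.sum_range_succ', add_comm]
  simp only [Nat.cast_add, Nat.cast_one, Nat.cast_zero, sub_zero, Nat.add_sub_add_right]
  congr 1
  refine Finset.sum_congr rfl fun j _ => ?_
  ring_nf

lemma svinin_succ_succ_eq_add_mul (k s : ℕ) (n : ℤ) :
    svinin α (s + 1) (k + 1) n = svinin α s (k + 1) n + svinin α (s + 1) k (n - 1) * α (n - s) := by
  rw [svinin_succ_eq_sum_mul, svinin_succ_eq_sum_mul, Finset.sum_range_succ]

/-- Both sides equal `α_n · S_{r+1}^{r-1}(n+r-1) · α_n` when `r ≥ 1`, and vanish when `r = 0`. -/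
lemma mul_svinin_succ_sub_svinin (r : ℕ) (n : ℤ) :
    α n * (svinin α (r + 1) r (n + r) - svinin α r r (n + r))
      = (svinin α (r + 1) r (n + r - 1) - svinin α r r (n + r - 2)) * α n := by
  cases r with
  | zero => simp
  | succ k =>
    have hright := svinin_succ_succ_eq_add_mul α k (k + 1) (n + (k + 1 : ℕ))
    have hleft := svinin_succ_succ_eq_mul_add α k (k + 1) (n + (k + 1 : ℕ) - 1)
    rw [show n + (k + 1 : ℕ) - (k + 1 : ℕ) = n by ring] at hright
    rw [show n + (k + 1 : ℕ) - 1 - k = n by push_cast; ring,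
      show n + (k + 1 : ℕ) - 1 - 1 = n + (k + 1 : ℕ) - 2 by ring] at hleft
    rw [hright, hleft]
    noncomm_ring

lemma mul_Dvl_sub_Dvl_mul (r : ℕ) (n : ℤ) :
    α n * Dvl α r n - Dvl α r (n - 1) * α n
      = svinin α r r (n + r - 1) * α n - α n * svinin α r r (n + r - 1) := by
  have h := mul_svinin_succ_sub_svinin α r n
  simp only [Dvl]
  rw [show n - 1 + r = n + r - 1 by ring, show n + r - 1 - 1 = n + r - 2 by ring]
  linear_combination (norm := noncomm_ring) h

end Svinin

lemma units_neg_one_zpow_sub_one (n : ℤ) : (-1 : ℤˣ) ^ (n - 1) = -(-1) ^ n := by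
  rw [zpow_sub_one, inv_neg_one, mul_neg_one]

lemma Fvl_sub_Fvl_sub_one {R : Type*} [Ring R] (α : ℤ → R) (c₀ c₁ : R) (r : ℕ) (n : ℤ) :
    Fvl α c₀ c₁ r n - Fvl α c₀ c₁ r (n - 1)
      = svinin α r r (n + r) - svinin α r r (n + r - 1)
        - 2 * (c₁ * ((((-1 : ℤˣ) ^ n : ℤˣ) : ℤ) : R)) := by
  simp only [Fvl, units_neg_one_zpow_sub_one, Units.val_neg, Int.cast_neg]
  rw [show n - 1 + r = n + r - 1 by ring]
  noncomm_ring

theorem volterra_stationary_rewrite_general {R : Type*} [Ring R] (α : ℤ → R)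
    (c₀ c₁ : R) (hc₁ : c₁ ∈ Set.center R)
    (r : ℕ) (n : ℤ) :
    α n * svinin α r r (n + (r : ℤ)) - svinin α r r (n + (r : ℤ) - 2) * α n
      = α n * (Fvl α c₀ c₁ r n - Fvl α c₀ c₁ r (n - 1) - Dvl α r n)
        + (Fvl α c₀ c₁ r (n - 1) - Fvl α c₀ c₁ r (n - 2) + Dvl α r (n - 1)) * α n := by
  have hcomm : Commute (α n) (c₁ * ((((-1 : ℤˣ) ^ n : ℤˣ) : ℤ) : R)) :=
    ((Set.mem_center_iff.mp hc₁).comm _).symm.mul_right (Int.commute_cast _ _)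
  have hF := Fvl_sub_Fvl_sub_one α c₀ c₁ r n
  have hF' := Fvl_sub_Fvl_sub_one α c₀ c₁ r (n - 1)
  rw [show n - 1 - 1 = n - 2 by ring, show n - 1 + r = n + r - 1 by ring,
    show n + r - 1 - 1 = n + r - 2 by ring, units_neg_one_zpow_sub_one, Units.val_neg,
    Int.cast_neg] at hF'
  linear_combination (norm := noncomm_ring)
    -(α n * hF) - hF' * α n + mul_Dvl_sub_Dvl_mul α r n + 2 * hcomm.eq

/-- The right-hand side of the `r`-th non-commutative Volterra lattice flow (up to sign)
rewritten via `F_{r,n}` and `D_{r,n}`: for every `n ∈ ℤ`,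
`α_n·S_r^r(n+r) − S_r^r(n+r−2)·α_n
  = α_n·(F_{r,n} − F_{r,n−1} − D_{r,n}) + (F_{r,n−1} − F_{r,n−2} + D_{r,n−1})·α_n`. -/
theorem volterra_stationary_rewrite {R : Type*} [Ring R] (α : ℤ → R)
    (c₀ c₁ : R) (hc₀ : c₀ ∈ Set.center R) (hc₁ : c₁ ∈ Set.center R)
    (r : ℕ) (hr : 1 ≤ r) (n : ℤ) :
    α n * svinin α r r (n + (r : ℤ)) - svinin α r r (n + (r : ℤ) - 2) * α n
      = α n * (Fvl α c₀ c₁ r n - Fvl α c₀ c₁ r (n - 1) - Dvl α r n)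
        + (Fvl α c₀ c₁ r (n - 1) - Fvl α c₀ c₁ r (n - 2) + Dvl α r (n - 1)) * α n :=
  volterra_stationary_rewrite_general α c₀ c₁ hc₁ r n
end
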